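/- arXiv:1008.2785 — 2 statements merged into one kernel-verified Lean document; each statement's English description precedes it below -/
import Mathlib

section
/- For all $n \geq 1$, the total number of rank sets for $G(k,n)$ summed over all dimensions equals the Stirling number of the second kind: the number of rank sets for $G(k,n)$ is $S(n+1, n-k+1)$, the number of set partitions of $\{1, \dots, n+1\}$ into $n-k+1$ nonempty blocks, for $1 \le k \le n$. -/
/- STATEMENT 8: for 1 ≤ k ≤ n, the number of rank sets for G(k,n) equals the
Stirling number of the second kind S(n+1, n-k+1), the number of set partitions
of {1, …, n+1} into n-k+1 nonempty blocks. -/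

open scoped Classical

/-- The nonempty intervals `[l, r] ⊆ {1, …, n}`, encoded as pairs `(l, r)`. -/
def intervalsIn (n : ℕ) : Finset (ℕ × ℕ) :=
  (Finset.Icc 1 n ×ˢ Finset.Icc 1 n).filter fun p => p.1 ≤ p.2

/-- `M` is a rank set for `G(k,n)`: `k` nonempty intervals in `{1,…,n}` with
pairwise distinct left endpoints and pairwise distinct right endpoints. -/
def IsRankSet (k n : ℕ) (M : Finset (ℕ × ℕ)) : Prop :=
  M.card = k ∧ M ⊆ intervalsIn n ∧
    (∀ I ∈ M, ∀ J ∈ M, I.1 = J.1 → I = J) ∧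
    (∀ I ∈ M, ∀ J ∈ M, I.2 = J.2 → I = J)

/-- The collection of all rank sets for `G(k,n)`. -/
noncomputable def rankSets (k n : ℕ) : Finset (Finset (ℕ × ℕ)) :=
  (intervalsIn n).powerset.filter (IsRankSet k n)

/-- The Stirling number of the second kind `S(m, j)`: the number of set
partitions of an `m`-element set into `j` nonempty blocks.  A partition is
encoded as a finite set `P` of nonempty blocks such that every element lies in
exactly one block of `P`. -/
noncomputable def stirling2 (m j : ℕ) : ℕ :=
  Fintype.card {P : Finset (Finset (Fin m)) //
    (∀ b ∈ P, b ≠ ∅) ∧ (∀ x : Fin m, ∃! b, b ∈ P ∧ x ∈ b) ∧ P.card = j}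

/-!
Both counts satisfy the Stirling recurrence `S(m + 1, j + 1) = (j + 1) S(m, j + 1) + S(m, j)`.
For set partitions of `insert a s`: either `{a}` is a block, and removing it leaves a partition
of `s`; or `a` was added to one of the `j + 1` blocks of a partition of `s`.
For rank sets with `k + 1` intervals in `{1, …, n + 1}`: either no interval ends at `n + 1`, and
we have a rank set for `G(k + 1, n)`; or removing the interval ending at `n + 1` leaves a rank set
for `G(k, n)`, and the removed interval may start at any of the `n + 1 - k` unused left endpoints.
With `m = n + 1` and `j = n - k` the two recurrences agree, and so do the boundary values.
-/

open Finset

theorem insert_eq_insert_iff_of_forall_not {β : Type*} [DecidableEq β] {x₁ x₂ : β}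
    {s₁ s₂ : Finset β} (p : β → Prop) (hx₁ : p x₁) (hs₁ : ∀ y ∈ s₁, ¬p y)
    (hs₂ : ∀ y ∈ s₂, ¬p y) :
    insert x₁ s₁ = insert x₂ s₂ ↔ x₁ = x₂ ∧ s₁ = s₂ := by
  refine ⟨fun h => ?_, fun ⟨hx, hs⟩ => hx ▸ hs ▸ rfl⟩
  obtain rfl : x₁ = x₂ := by
    have : x₁ ∈ insert x₂ s₂ := h ▸ mem_insert_self x₁ s₁
    exact (mem_insert.1 this).resolve_right fun hx => hs₂ x₁ hx hx₁
  refine ⟨rfl, ?_⟩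
  rw [← erase_insert fun hx => hs₁ x₁ hx hx₁, h, erase_insert fun hx => hs₂ x₁ hx hx₁]

section SetPartition

variable {α : Type*}

structure IsSetPartition (s : Finset α) (P : Finset (Finset α)) : Prop where
  subset : ∀ b ∈ P, b ⊆ s
  ne_empty : ∀ b ∈ P, b ≠ ∅
  existsUnique : ∀ x ∈ s, ∃! b, b ∈ P ∧ x ∈ b

noncomputable def setPartitions (s : Finset α) (j : ℕ) : Finset (Finset (Finset α)) :=
  s.powerset.powerset.filter fun P => IsSetPartition s P ∧ #P = j

variable {s : Finset α} {P : Finset (Finset α)} {a : α} {b c : Finset α} {j : ℕ}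

theorem mem_setPartitions : P ∈ setPartitions s j ↔ IsSetPartition s P ∧ #P = j := by
  simp only [setPartitions, mem_filter, mem_powerset, and_iff_right_iff_imp]
  exact fun h _ hb => mem_powerset.2 (h.1.subset _ hb)

namespace IsSetPartition

theorem eq_of_mem (hP : IsSetPartition s P) {x : α} (hb : b ∈ P) (hc : c ∈ P)
    (hxb : x ∈ b) (hxc : x ∈ c) : b = c :=
  (hP.existsUnique x (hP.subset b hb hxb)).unique ⟨hb, hxb⟩ ⟨hc, hxc⟩

theorem notMem_of_notMem (hP : IsSetPartition s P) (ha : a ∉ s) (hb : b ∈ P) : a ∉ b :=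
  fun h => ha (hP.subset b hb h)

theorem erase (hP : IsSetPartition s P) (hb : b ∈ P) : IsSetPartition (s \ b) (P.erase b) where
  subset c hc x hx := by
    obtain ⟨hcb, hcP⟩ := mem_erase.1 hc
    exact mem_sdiff.2 ⟨hP.subset c hcP hx, fun hxb => hcb (hP.eq_of_mem hcP hb hx hxb)⟩
  ne_empty c hc := hP.ne_empty c (mem_of_mem_erase hc)
  existsUnique x hx := by
    obtain ⟨hxs, hxb⟩ := mem_sdiff.1 hx
    obtain ⟨c, ⟨hcP, hxc⟩, hc⟩ := hP.existsUnique x hxs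
    refine ⟨c, ⟨mem_erase.2 ⟨?_, hcP⟩, hxc⟩, fun d hd => hc d ⟨mem_of_mem_erase hd.1, hd.2⟩⟩
    rintro rfl
    exact hxb hxc

theorem extend (hP : IsSetPartition s P) (hb : b ≠ ∅) (hbs : Disjoint b s) :
    IsSetPartition (b ∪ s) (insert b P) where
  subset c hc := by
    rcases mem_insert.1 hc with rfl | hc
    · exact subset_union_left
    · exact (hP.subset c hc).trans subset_union_right
  ne_empty c hc := by
    rcases mem_insert.1 hc with rfl | hc
    · exact hb
    · exact hP.ne_empty c hc
  existsUnique x hx := by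
    rcases mem_union.1 hx with hxb | hxs
    · refine ⟨b, ⟨mem_insert_self b P, hxb⟩, fun c ⟨hc, hxc⟩ => ?_⟩
      rcases mem_insert.1 hc with rfl | hc
      · rfl
      · exact absurd (hP.subset c hc hxc) (disjoint_left.1 hbs hxb)
    · obtain ⟨c, ⟨hcP, hxc⟩, hc⟩ := hP.existsUnique x hxs
      refine ⟨c, ⟨mem_insert_of_mem hcP, hxc⟩, fun d ⟨hd, hxd⟩ => ?_⟩
      rcases mem_insert.1 hd with rfl | hd
      · exact absurd hxs (disjoint_left.1 hbs hxd)
      · exact hc d ⟨hd, hxd⟩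

theorem notMem_of_ssubset (hP : IsSetPartition s P) (hb : b ∈ P) (hcb : c ⊂ b) (hc : c ≠ ∅) :
    c ∉ P := fun hcP => by
  obtain ⟨x, hx⟩ := nonempty_iff_ne_empty.2 hc
  exact hcb.ne (hP.eq_of_mem hcP hb hx (hcb.subset hx))

theorem insert_insert_erase (hP : IsSetPartition s P) (ha : a ∉ s) (hb : b ∈ P) :
    IsSetPartition (insert a s) (insert (insert a b) (P.erase b)) := by
  have hs : insert a b ∪ (s \ b) = insert a s := by
    have := hP.subset b hb
    ext x
    simp only [mem_union, mem_insert, mem_sdiff]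
    grind
  refine hs ▸ (hP.erase hb).extend (insert_ne_empty a b) (disjoint_left.2 fun x hx => ?_)
  rcases mem_insert.1 hx with rfl | hx
  · exact fun h => ha (mem_sdiff.1 h).1
  · exact fun h => (mem_sdiff.1 h).2 hx

theorem insert_erase_erase (hP : IsSetPartition (insert a s) P) (ha : a ∉ s) (hb : b ∈ P)
    (hab : a ∈ b) (hba : b.erase a ≠ ∅) : IsSetPartition s (insert (b.erase a) (P.erase b)) := by
  have hs : b.erase a ∪ (insert a s \ b) = s := by
    have := hP.subset b hb
    ext x
    simp only [mem_union, mem_insert, mem_sdiff, mem_erase]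
    grind
  refine hs ▸ (hP.erase hb).extend hba (disjoint_left.2 fun x hx h => ?_)
  exact (mem_sdiff.1 h).2 (mem_of_mem_erase hx)

theorem eq_of_insert_insert_erase_eq {Q₁ Q₂ : Finset (Finset α)} {c₁ c₂ : Finset α}
    (hQ₁ : IsSetPartition s Q₁) (hQ₂ : IsSetPartition s Q₂) (ha : a ∉ s)
    (hc₁ : c₁ ∈ Q₁) (hc₂ : c₂ ∈ Q₂)
    (h : insert (insert a c₁) (Q₁.erase c₁) = insert (insert a c₂) (Q₂.erase c₂)) :
    Q₁ = Q₂ ∧ c₁ = c₂ := by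
  obtain ⟨hblock, hrest⟩ := (insert_eq_insert_iff_of_forall_not (a ∈ ·) (mem_insert_self a c₁)
    (fun _ hb => hQ₁.notMem_of_notMem ha (mem_of_mem_erase hb))
    (fun _ hb => hQ₂.notMem_of_notMem ha (mem_of_mem_erase hb))).1 h
  obtain rfl : c₁ = c₂ := by
    rw [← erase_insert (hQ₁.notMem_of_notMem ha hc₁), hblock,
      erase_insert (hQ₂.notMem_of_notMem ha hc₂)]
  exact ⟨by rw [← insert_erase hc₁, hrest, insert_erase hc₂], rfl⟩

end IsSetPartition

theorem isSetPartition_empty_iff : IsSetPartition (∅ : Finset α) P ↔ P = ∅ := by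
  refine ⟨fun hP => eq_empty_of_forall_notMem fun b hb => hP.ne_empty b hb ?_, ?_⟩
  · exact subset_empty.1 (hP.subset b hb)
  · rintro rfl
    exact ⟨by simp, by simp, by simp⟩

theorem setPartitions_zero_of_nonempty (hs : s.Nonempty) : setPartitions s 0 = ∅ := by
  refine eq_empty_of_forall_notMem fun P hP => ?_
  obtain ⟨hP, hcard⟩ := mem_setPartitions.1 hP
  obtain ⟨x, hx⟩ := hs
  obtain ⟨b, ⟨hb, -⟩, -⟩ := hP.existsUnique x hx
  simp [card_eq_zero.1 hcard] at hb

theorem card_filter_singleton_mem_setPartitions (ha : a ∉ s) :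
    #((setPartitions (insert a s) (j + 1)).filter ({a} ∈ ·)) = #(setPartitions s j) := by
  refine card_bij' (fun P _ => P.erase {a}) (fun Q _ => insert {a} Q) (fun P hP => ?_)
    (fun Q hQ => ?_) (fun P hP => insert_erase (mem_filter.1 hP).2) (fun Q hQ => erase_insert ?_)
  · rw [mem_filter, mem_setPartitions] at hP
    obtain ⟨⟨hP, hcard⟩, haP⟩ := hP
    have hs : insert a s \ {a} = s := by
      ext x
      simp only [mem_sdiff, mem_insert, mem_singleton]
      grind
    refine mem_setPartitions.2 ⟨hs ▸ hP.erase haP, ?_⟩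
    rw [card_erase_of_mem haP, hcard, Nat.add_sub_cancel]
  · obtain ⟨hQ, hcard⟩ := mem_setPartitions.1 hQ
    have haQ : {a} ∉ Q := fun h => hQ.notMem_of_notMem ha h (mem_singleton_self a)
    refine mem_filter.2 ⟨mem_setPartitions.2 ⟨?_, ?_⟩, mem_insert_self _ _⟩
    · rw [insert_eq]
      exact hQ.extend (singleton_ne_empty a) (disjoint_singleton_left.2 ha)
    · rw [card_insert_of_notMem haQ, hcard]
  · exact fun h => (mem_setPartitions.1 hQ).1.notMem_of_notMem ha h (mem_singleton_self a)

theorem insert_insert_erase_mem_setPartitions {Q : Finset (Finset α)} (ha : a ∉ s)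
    (hQ : Q ∈ setPartitions s (j + 1)) (hc : c ∈ Q) :
    insert (insert a c) (Q.erase c) ∈ (setPartitions (insert a s) (j + 1)).filter ({a} ∉ ·) := by
  obtain ⟨hQ, hcard⟩ := mem_setPartitions.1 hQ
  have hac : insert a c ∉ Q.erase c := fun h =>
    hQ.notMem_of_notMem ha (mem_of_mem_erase h) (mem_insert_self a c)
  refine mem_filter.2 ⟨mem_setPartitions.2 ⟨hQ.insert_insert_erase ha hc, ?_⟩, fun h => ?_⟩
  · rw [card_insert_of_notMem hac, card_erase_of_mem hc, hcard, Nat.add_sub_cancel]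
  rcases mem_insert.1 h with h | h
  · obtain ⟨x, hx⟩ := nonempty_iff_ne_empty.2 (hQ.ne_empty c hc)
    have hxa : x = a := mem_singleton.1 (h ▸ mem_insert_of_mem hx)
    exact ha (hxa ▸ hQ.subset c hc hx)
  · exact hQ.notMem_of_notMem ha (mem_of_mem_erase h) (mem_singleton_self a)

theorem exists_insert_insert_erase_eq (ha : a ∉ s)
    (hP : P ∈ (setPartitions (insert a s) (j + 1)).filter ({a} ∉ ·)) :
    ∃ Q ∈ setPartitions s (j + 1), ∃ c ∈ Q, insert (insert a c) (Q.erase c) = P := by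
  rw [mem_filter, mem_setPartitions] at hP
  obtain ⟨⟨hP, hcard⟩, haP⟩ := hP
  obtain ⟨b, ⟨hb, hab⟩, -⟩ := hP.existsUnique a (mem_insert_self a s)
  have hba : b.erase a ≠ ∅ := by
    rw [Ne, erase_eq_empty_iff, not_or]
    exact ⟨hP.ne_empty b hb, fun h => haP (h ▸ hb)⟩
  have hbaP : b.erase a ∉ P.erase b := fun h =>
    hP.notMem_of_ssubset hb (erase_ssubset hab) hba (mem_of_mem_erase h)
  refine ⟨insert (b.erase a) (P.erase b), mem_setPartitions.2 ⟨?_, ?_⟩, b.erase a,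
    mem_insert_self _ _, ?_⟩
  · exact hP.insert_erase_erase ha hb hab hba
  · rw [card_insert_of_notMem hbaP, card_erase_of_mem hb, hcard, Nat.add_sub_cancel]
  · rw [erase_insert hbaP, insert_erase hab, insert_erase hb]

theorem card_filter_singleton_notMem_setPartitions (ha : a ∉ s) :
    #((setPartitions (insert a s) (j + 1)).filter ({a} ∉ ·)) =
      (j + 1) * #(setPartitions s (j + 1)) := by
  have hsigma : #((setPartitions s (j + 1)).sigma fun Q => Q) =
      (j + 1) * #(setPartitions s (j + 1)) := by
    rw [card_sigma, sum_congr rfl fun Q hQ => (mem_setPartitions.1 hQ).2, sum_const, smul_eq_mul,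
      mul_comm]
  rw [← hsigma]
  symm
  refine card_bij (fun Qc _ => insert (insert a Qc.2) (Qc.1.erase Qc.2))
    (fun Qc h => insert_insert_erase_mem_setPartitions ha (mem_sigma.1 h).1 (mem_sigma.1 h).2)
    (fun ⟨Q₁, c₁⟩ h₁ ⟨Q₂, c₂⟩ h₂ h => ?_) (fun P hP => ?_)
  · obtain ⟨hQ₁, hc₁⟩ := mem_sigma.1 h₁
    obtain ⟨hQ₂, hc₂⟩ := mem_sigma.1 h₂
    obtain ⟨rfl, rfl⟩ := (mem_setPartitions.1 hQ₁).1.eq_of_insert_insert_erase_eq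
      (mem_setPartitions.1 hQ₂).1 ha hc₁ hc₂ h
    rfl
  · obtain ⟨Q, hQ, c, hc, rfl⟩ := exists_insert_insert_erase_eq ha hP
    exact ⟨⟨Q, c⟩, mem_sigma.2 ⟨hQ, hc⟩, rfl⟩

theorem card_setPartitions_insert (ha : a ∉ s) :
    #(setPartitions (insert a s) (j + 1)) =
      (j + 1) * #(setPartitions s (j + 1)) + #(setPartitions s j) := by
  rw [← card_filter_add_card_filter_not ({a} ∉ ·), card_filter_singleton_notMem_setPartitions ha]
  simp only [not_not]
  rw [card_filter_singleton_mem_setPartitions ha]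

theorem card_setPartitions (s : Finset α) (j : ℕ) :
    #(setPartitions s j) = Nat.stirlingSecond #s j := by
  induction s using Finset.induction_on generalizing j with
  | empty =>
    have : setPartitions (∅ : Finset α) j = if j = 0 then {∅} else ∅ := by
      ext P
      rw [mem_setPartitions, isSetPartition_empty_iff]
      split_ifs with hj <;> aesop
    cases j <;> simp [this]
  | insert a s ha ih =>
    cases j with
    | zero => simp [setPartitions_zero_of_nonempty (insert_nonempty a s), card_insert_of_notMem ha]
    | succ j => rw [card_setPartitions_insert ha, ih, ih, card_insert_of_notMem ha]; rfl

theorem stirling2_eq_stirlingSecond (m j : ℕ) : stirling2 m j = Nat.stirlingSecond m j := by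
  have := card_setPartitions (univ : Finset (Fin m)) j
  rw [card_univ, Fintype.card_fin] at this
  rw [stirling2, Fintype.card_subtype, ← this]
  congr 1
  ext P
  simp only [mem_filter, mem_univ, true_and, mem_setPartitions]
  exact ⟨fun ⟨hne, hex, hcard⟩ => ⟨⟨fun _ _ => subset_univ _, hne, fun x _ => hex x⟩, hcard⟩,
    fun ⟨hP, hcard⟩ => ⟨hP.ne_empty, fun x => hP.existsUnique x (mem_univ x), hcard⟩⟩

end SetPartition

section RankSets

variable {k n : ℕ} {M : Finset (ℕ × ℕ)}

theorem mem_intervalsIn {I : ℕ × ℕ} : I ∈ intervalsIn n ↔ 1 ≤ I.1 ∧ I.1 ≤ I.2 ∧ I.2 ≤ n := by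
  simp only [intervalsIn, mem_filter, mem_product, mem_Icc]
  omega

theorem mem_rankSets : M ∈ rankSets k n ↔ IsRankSet k n M := by
  rw [rankSets, mem_filter, mem_powerset]
  exact ⟨fun h => h.2, fun h => ⟨h.2.1, h⟩⟩

theorem rankSets_zero_left (n : ℕ) : rankSets 0 n = {∅} := by
  ext M
  rw [mem_rankSets, mem_singleton]
  refine ⟨fun h => card_eq_zero.1 h.1, ?_⟩
  rintro rfl
  exact ⟨rfl, empty_subset _, by simp, by simp⟩

theorem rankSets_succ_zero (k : ℕ) : rankSets (k + 1) 0 = ∅ := by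
  refine eq_empty_of_forall_notMem fun M hM => ?_
  obtain ⟨hcard, hsub, -⟩ := mem_rankSets.1 hM
  have : M = ∅ := subset_empty.1 fun I hI => by have := mem_intervalsIn.1 (hsub hI); omega
  simp [this] at hcard

theorem IsRankSet.bounds_of_mem {I : ℕ × ℕ} (hM : IsRankSet k n M) (hI : I ∈ M) :
    1 ≤ I.1 ∧ I.1 ≤ I.2 ∧ I.2 ≤ n :=
  mem_intervalsIn.1 (hM.2.1 hI)

theorem IsRankSet.fst_mem_Icc_sdiff_image_erase {I : ℕ × ℕ} (hM : IsRankSet k n M) (hI : I ∈ M) :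
    I.1 ∈ Icc 1 n \ (M.erase I).image Prod.fst := by
  have := hM.bounds_of_mem hI
  refine mem_sdiff.2 ⟨mem_Icc.2 ⟨this.1, by omega⟩, fun h => ?_⟩
  obtain ⟨J, hJ, hJI⟩ := mem_image.1 h
  exact (mem_erase.1 hJ).1 (hM.2.2.1 J (mem_of_mem_erase hJ) I hI hJI)

theorem card_Icc_sdiff_image_fst (hM : IsRankSet k n M) :
    #(Icc 1 (n + 1) \ M.image Prod.fst) = n + 1 - k := by
  have himage : M.image Prod.fst ⊆ Icc 1 (n + 1) := fun x hx => by
    obtain ⟨I, hI, rfl⟩ := mem_image.1 hx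
    have := hM.bounds_of_mem hI
    exact mem_Icc.2 ⟨this.1, by omega⟩
  rw [card_sdiff_of_subset himage, card_image_of_injOn fun I hI J hJ => hM.2.2.1 I hI J hJ, hM.1,
    Nat.card_Icc, Nat.add_sub_cancel]

theorem IsRankSet.insert {l : ℕ} (hM : IsRankSet k n M)
    (hl : l ∈ Icc 1 (n + 1) \ M.image Prod.fst) :
    IsRankSet (k + 1) (n + 1) (insert (l, n + 1) M) := by
  obtain ⟨hcard, hsub, hfst, hsnd⟩ := hM
  obtain ⟨hl, hlM⟩ := mem_sdiff.1 hl
  have hlt : ∀ J ∈ M, J.2 < n + 1 := fun J hJ => by have := mem_intervalsIn.1 (hsub hJ); omega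
  refine ⟨?_, ?_, ?_, ?_⟩
  · rw [card_insert_of_notMem fun h => (hlt _ h).false, hcard]
  · refine insert_subset (mem_intervalsIn.2 ?_) fun J hJ => ?_
    · have := mem_Icc.1 hl
      omega
    · have := mem_intervalsIn.1 (hsub hJ)
      exact mem_intervalsIn.2 (by omega)
  · simp only [mem_insert, forall_eq_or_imp]
    refine ⟨⟨fun _ => trivial, fun J hJ h => absurd (mem_image.2 ⟨J, hJ, h.symm⟩) hlM⟩,
      fun I hI => ⟨fun h => absurd (mem_image.2 ⟨I, hI, h⟩) hlM, hfst I hI⟩⟩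
  · simp only [mem_insert, forall_eq_or_imp]
    refine ⟨⟨fun _ => trivial, fun J hJ h => absurd h.symm (hlt J hJ).ne⟩,
      fun I hI => ⟨fun h => absurd h (hlt I hI).ne, hsnd I hI⟩⟩

theorem IsRankSet.erase {I : ℕ × ℕ} (hM : IsRankSet (k + 1) (n + 1) M) (hI : I ∈ M)
    (hI2 : I.2 = n + 1) : IsRankSet k n (M.erase I) := by
  obtain ⟨hcard, hsub, hfst, hsnd⟩ := hM
  refine ⟨by rw [card_erase_of_mem hI, hcard, Nat.add_sub_cancel], fun J hJ => ?_,
    fun A hA B hB => hfst A (mem_of_mem_erase hA) B (mem_of_mem_erase hB),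
    fun A hA B hB => hsnd A (mem_of_mem_erase hA) B (mem_of_mem_erase hB)⟩
  obtain ⟨hJI, hJM⟩ := mem_erase.1 hJ
  have hJ2 : J.2 ≠ n + 1 := fun h => hJI (hsnd J hJM I hI (h.trans hI2.symm))
  have := mem_intervalsIn.1 (hsub hJM)
  exact mem_intervalsIn.2 (by omega)

theorem filter_rankSets_forall_snd_ne (k n : ℕ) :
    (rankSets k (n + 1)).filter (fun M => ∀ I ∈ M, I.2 ≠ n + 1) = rankSets k n := by
  ext M
  simp only [mem_filter, mem_rankSets, IsRankSet]
  constructor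
  · rintro ⟨⟨hcard, hsub, hfst, hsnd⟩, hne⟩
    refine ⟨hcard, fun I hI => ?_, hfst, hsnd⟩
    have := mem_intervalsIn.1 (hsub hI)
    exact mem_intervalsIn.2 (by have := hne I hI; omega)
  · rintro ⟨hcard, hsub, hfst, hsnd⟩
    have hle : ∀ I ∈ M, I.2 ≤ n := fun I hI => (mem_intervalsIn.1 (hsub hI)).2.2
    refine ⟨⟨hcard, fun I hI => ?_, hfst, hsnd⟩, fun I hI => by have := hle I hI; omega⟩
    have := mem_intervalsIn.1 (hsub hI)
    exact mem_intervalsIn.2 (by omega)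

theorem card_filter_rankSets_exists_snd_eq (k n : ℕ) :
    #((rankSets (k + 1) (n + 1)).filter fun M => ∃ I ∈ M, I.2 = n + 1) =
      (n + 1 - k) * #(rankSets k n) := by
  have hsigma : #((rankSets k n).sigma fun M => Icc 1 (n + 1) \ M.image Prod.fst) =
      (n + 1 - k) * #(rankSets k n) := by
    rw [card_sigma, sum_congr rfl fun M hM => card_Icc_sdiff_image_fst (mem_rankSets.1 hM),
      sum_const, smul_eq_mul, mul_comm]
  rw [← hsigma]
  symm
  refine card_bij (fun Ml _ => insert (Ml.2, n + 1) Ml.1) (fun Ml h => ?_)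
    (fun ⟨M₁, l₁⟩ h₁ ⟨M₂, l₂⟩ h₂ h => ?_) (fun M hM => ?_)
  · obtain ⟨hM, hl⟩ := mem_sigma.1 h
    exact mem_filter.2 ⟨mem_rankSets.2 ((mem_rankSets.1 hM).insert hl), _, mem_insert_self _ _, rfl⟩
  · have hlt : ∀ {M}, M ∈ rankSets k n → ∀ J ∈ M, ¬J.2 = n + 1 := fun hM J hJ => by
      have := (mem_rankSets.1 hM).bounds_of_mem hJ
      omega
    obtain ⟨hl, rfl⟩ := (insert_eq_insert_iff_of_forall_not (·.2 = n + 1) rfl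
      (hlt (mem_sigma.1 h₁).1) (hlt (mem_sigma.1 h₂).1)).1 h
    obtain rfl : l₁ = l₂ := congrArg Prod.fst hl
    rfl
  · obtain ⟨hM, I, hI, hI2⟩ := mem_filter.1 hM
    have hM := mem_rankSets.1 hM
    refine ⟨⟨M.erase I, I.1⟩, mem_sigma.2 ⟨mem_rankSets.2 (hM.erase hI hI2),
      hM.fst_mem_Icc_sdiff_image_erase hI⟩, ?_⟩
    dsimp only
    rw [← hI2, insert_erase hI]

theorem card_rankSets_succ_succ (k n : ℕ) :
    #(rankSets (k + 1) (n + 1)) = (n + 1 - k) * #(rankSets k n) + #(rankSets (k + 1) n) := by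
  rw [← card_filter_add_card_filter_not (fun M => ∃ I ∈ M, I.2 = n + 1),
    card_filter_rankSets_exists_snd_eq, ← filter_rankSets_forall_snd_ne (k + 1) n]
  simp only [not_exists, not_and]

-- For `n < k` both sides vanish, the truncated `n + 1 - k` being `0`.
theorem card_rankSets (k n : ℕ) : #(rankSets k n) = Nat.stirlingSecond (n + 1) (n + 1 - k) := by
  induction n generalizing k with
  | zero => cases k <;> simp [rankSets_zero_left, rankSets_succ_zero, Nat.stirlingSecond_self]
  | succ n ih =>
    cases k with
    | zero => simp [rankSets_zero_left, Nat.stirlingSecond_self]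
    | succ k =>
      rw [card_rankSets_succ_succ, ih, ih]
      rcases Nat.lt_or_ge n k with hnk | hkn
      · simp [Nat.sub_eq_zero_of_le hnk, Nat.sub_eq_zero_of_le hnk.le]
      · rw [show n + 1 + 1 - (k + 1) = (n - k) + 1 by omega, Nat.stirlingSecond_succ_succ,
          show n + 1 - (k + 1) = n - k by omega, show n + 1 - k = n - k + 1 by omega]

end RankSets

theorem card_rankSets_eq_stirling_general (k n : ℕ) (hkn : k ≤ n) :
    (rankSets k n).card = stirling2 (n + 1) (n - k + 1) := by
  rw [card_rankSets, stirling2_eq_stirlingSecond, Nat.sub_add_comm hkn]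

theorem card_rankSets_eq_stirling (k n : ℕ) (hk : 1 ≤ k) (hkn : k ≤ n) :
    (rankSets k n).card = stirling2 (n + 1) (n - k + 1) :=
  card_rankSets_eq_stirling_general k n hkn
end

section
/- Let $u = (u_1, \dots, u_k)$ and $v = (v_1, \dots, v_k)$ be strictly increasing sequences in $\{1,\dots,n\}$ indexing Schubert varieties $X_u(F_\bullet)$ and $X^v(G_\bullet)$ in $G(k,n)$ with respect to opposite coordinate flags ($F_i = \mathrm{Span}(e_1,\dots,e_i)$, $G_i = \mathrm{Span}(e_n,\dots,e_{n-i+1})$). Suppose the Richardson variety $R(u,v) = X_u \cap X^v$ is nonempty. Then $X_u^{sing} \cap X^v = \emptyset$ if and only if $u_i + v_{k-i} \leq n$ for every $1 \le i < k$ with $u_{i+1} \neq u_i + 1$; symmetrically, $X_u \cap X^v_{sing} = \emptyset$ if and only if $v_i + u_{k-i} \leq n$ for every $1 \le i < k$ with $v_{i+1} \neq v_i + 1$; and $R(u,v)$ is smooth if and only if both of these conditions hold. -/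
/- STATEMENT 16: smoothness criterion for Richardson varieties in G(k,n).
Schubert varieties X_u, X^v in G(k,n) are defined by rank conditions with
respect to the two opposite coordinate flags F_i = Span(e_1,…,e_i) and
G_i = Span(e_n,…,e_{n-i+1}).  The singular locus of X_u is the locus of Λ ∈ X_u
with dim(Λ ∩ F_{u_i}) ≥ i + 1 for some 1 ≤ i < k with u_{i+1} ≠ u_i + 1
(adding a maximal hook), and similarly for X^v; by Kleiman transversality the
singular locus of R(u,v) = X_u ∩ X^v is
(X_u^{sing} ∩ X^v) ∪ (X_u ∩ X^v_{sing}), and R(u,v) is smooth iff this is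
empty.  The theorem: X_u^{sing} ∩ X^v = ∅ iff u_i + v_{k-i} ≤ n for every
1 ≤ i < k with u_{i+1} ≠ u_i + 1; symmetrically for X_u ∩ X^v_{sing}; and
R(u,v) is smooth iff both conditions hold.  (Sequences are 0-indexed below:
the 1-based entry u_i is `u ⟨i-1⟩`.) -/

noncomputable section

open Module

variable (n : ℕ)

/-- The standard flag: `F a = Span(e_1, …, e_a)`. -/
def Fflag (a : ℕ) : Submodule ℂ (Fin n → ℂ) :=
  Submodule.span ℂ ((fun t : Fin n => (Pi.basisFun ℂ (Fin n)) t) '' {t | (t : ℕ) + 1 ≤ a})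

/-- The opposite flag: `G b = Span(e_n, …, e_{n-b+1})`. -/
def Gflag (b : ℕ) : Submodule ℂ (Fin n → ℂ) :=
  Submodule.span ℂ ((fun t : Fin n => (Pi.basisFun ℂ (Fin n)) t) '' {t | n - b ≤ (t : ℕ)})

variable {k : ℕ} (u v : Fin k → ℕ)

/-- The Schubert variety `X_u ⊆ G(k,n)` for the standard flag. -/
def SchubertXu : Set (Submodule ℂ (Fin n → ℂ)) :=
  {Λ | finrank ℂ Λ = k ∧ ∀ i : Fin k, (i : ℕ) + 1 ≤ finrank ℂ ↥(Λ ⊓ Fflag n (u i))}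

/-- The opposite Schubert variety `X^v ⊆ G(k,n)`. -/
def SchubertXv : Set (Submodule ℂ (Fin n → ℂ)) :=
  {Λ | finrank ℂ Λ = k ∧ ∀ i : Fin k, (i : ℕ) + 1 ≤ finrank ℂ ↥(Λ ⊓ Gflag n (v i))}

/-- The singular locus of `X_u`: points satisfying the rank condition of some
maximal hook, i.e. `dim(Λ ∩ F_{u_i}) ≥ i + 1` for some `i < k` with
`u_{i+1} ≠ u_i + 1`. -/
def SchubertXuSing : Set (Submodule ℂ (Fin n → ℂ)) :=
  {Λ | Λ ∈ SchubertXu n u ∧ ∃ i : Fin k, ∃ h : (i : ℕ) + 1 < k,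
    u ⟨(i : ℕ) + 1, h⟩ ≠ u i + 1 ∧ (i : ℕ) + 2 ≤ finrank ℂ ↥(Λ ⊓ Fflag n (u i))}

/-- The singular locus of `X^v`. -/
def SchubertXvSing : Set (Submodule ℂ (Fin n → ℂ)) :=
  {Λ | Λ ∈ SchubertXv n v ∧ ∃ i : Fin k, ∃ h : (i : ℕ) + 1 < k,
    v ⟨(i : ℕ) + 1, h⟩ ≠ v i + 1 ∧ (i : ℕ) + 2 ≤ finrank ℂ ↥(Λ ⊓ Gflag n (v i))}

lemma mem_Fflag_of {a : ℕ} {t : Fin n} (h : (t : ℕ) + 1 ≤ a) :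
    (Pi.basisFun ℂ (Fin n)) t ∈ Fflag n a :=
  Submodule.subset_span ⟨t, h, rfl⟩

lemma mem_Gflag_of {b : ℕ} {t : Fin n} (h : n - b ≤ (t : ℕ)) :
    (Pi.basisFun ℂ (Fin n)) t ∈ Gflag n b :=
  Submodule.subset_span ⟨t, h, rfl⟩

lemma Fflag_disjoint_Gflag {a b : ℕ} (h : a + b ≤ n) :
    Disjoint (Fflag n a) (Gflag n b) := by
  refine (Pi.basisFun ℂ (Fin n)).linearIndependent.disjoint_span_image ?_
  rw [Set.disjoint_left]
  intro t ht1 ht2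
  simp only [Set.mem_setOf_eq] at ht1 ht2
  omega

lemma rank_ge {W : Submodule ℂ (Fin n → ℂ)} {m : ℕ} (c : Fin m → Fin n)
    (hinj : Function.Injective c)
    (hmem : ∀ j, (Pi.basisFun ℂ (Fin n)) (c j) ∈ W) :
    m ≤ finrank ℂ W := by
  have hli : LinearIndependent ℂ (fun j => (Pi.basisFun ℂ (Fin n)) (c j)) :=
    (Pi.basisFun ℂ (Fin n)).linearIndependent.comp c hinj
  have hsp := finrank_span_eq_card hli
  rw [Fintype.card_fin] at hsp
  have hle : Submodule.span ℂ (Set.range fun j => (Pi.basisFun ℂ (Fin n)) (c j)) ≤ W := by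
    rw [Submodule.span_le]
    rintro x ⟨j, rfl⟩
    exact hmem j
  calc m = finrank ℂ (Submodule.span ℂ
        (Set.range fun j => (Pi.basisFun ℂ (Fin n)) (c j))) := hsp.symm
    _ ≤ finrank ℂ W := Submodule.finrank_mono hle

lemma dim_force {a b p q : ℕ} {Λ : Submodule ℂ (Fin n → ℂ)} (hΛ : finrank ℂ Λ = k)
    (hF : p ≤ finrank ℂ ↥(Λ ⊓ Fflag n a)) (hG : q ≤ finrank ℂ ↥(Λ ⊓ Gflag n b))
    (hpq : k < p + q) : n < a + b := by
  by_contra hcon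
  push_neg at hcon
  have hd : Disjoint (Λ ⊓ Fflag n a) (Λ ⊓ Gflag n b) :=
    (Fflag_disjoint_Gflag n hcon).mono inf_le_right inf_le_right
  have hsum := Submodule.finrank_sup_add_finrank_inf_eq (Λ ⊓ Fflag n a) (Λ ⊓ Gflag n b)
  rw [disjoint_iff.mp hd, finrank_bot] at hsum
  have hsup : finrank ℂ ↥(Λ ⊓ Fflag n a ⊔ Λ ⊓ Gflag n b) ≤ k := by
    rw [← hΛ]
    exact Submodule.finrank_mono (sup_le inf_le_left inf_le_left)
  omega

lemma richardson_ineq (hne : (SchubertXu n u ∩ SchubertXv n v).Nonempty) (j : Fin k) :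
    n < u j + v j.rev := by
  obtain ⟨Λ, hΛu, hΛv⟩ := hne
  refine dim_force n hΛu.1 (hΛu.2 j) (hΛv.2 j.rev) ?_
  show k < ((j : ℕ) + 1) + ((k - ((j : ℕ) + 1)) + 1)
  have := j.isLt
  omega

/-- the coordinate singular point on the u-side -/
lemma exists_sing_point_u (hu : StrictMono u) (hv : StrictMono v)
    (hu1 : ∀ i, 1 ≤ u i) (hun : ∀ i, u i ≤ n)
    (hv1 : ∀ i, 1 ≤ v i) (hvn : ∀ i, v i ≤ n)
    (hNE : ∀ j : Fin k, n < u j + v j.rev)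
    (i : Fin k) (hik : (i : ℕ) + 1 < k)
    (hneq : u ⟨(i : ℕ) + 1, hik⟩ ≠ u i + 1)
    (hook : n < u i + v (⟨(i : ℕ) + 1, hik⟩ : Fin k).rev) :
    (SchubertXuSing n u ∩ SchubertXv n v).Nonempty := by
  have hn0 : 0 < n := lt_of_lt_of_le (hv1 i) (hvn i)
  set e : Fin n → (Fin n → ℂ) := fun t => (Pi.basisFun ℂ (Fin n)) t with he
  let c : Fin k → Fin n := fun j => ⟨n - v j.rev, by have := hv1 j.rev; omega⟩
  have hcval : ∀ j, (c j : ℕ) = n - v j.rev := fun j => rfl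
  have hcs : StrictMono c := by
    intro j j' hjj
    have h1 : j'.rev < j.rev := Fin.rev_lt_rev.mpr hjj
    have h2 : v j'.rev < v j.rev := hv h1
    have h3 := hvn j.rev
    simp only [Fin.lt_def, hcval]
    omega
  set Λ0 : Submodule ℂ (Fin n → ℂ) :=
    Submodule.span ℂ (Set.range fun j => e (c j)) with hΛ0
  have hmem0 : ∀ j, e (c j) ∈ Λ0 := fun j => Submodule.subset_span ⟨j, rfl⟩
  have hfin : finrank ℂ Λ0 = k := by
    have hli : LinearIndependent ℂ (fun j => e (c j)) :=
      (Pi.basisFun ℂ (Fin n)).linearIndependent.comp c hcs.injective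
    rw [hΛ0, finrank_span_eq_card hli, Fintype.card_fin]
  -- key inequality: (c j) + 1 ≤ u j
  have hcu : ∀ j : Fin k, (c j : ℕ) + 1 ≤ u j := by
    intro j
    have h1 := hNE j
    have h2 := hvn j.rev
    rw [hcval]
    omega
  have hXu : Λ0 ∈ SchubertXu n u := by
    refine ⟨hfin, fun i' => ?_⟩
    refine rank_ge n (fun j : Fin ((i' : ℕ) + 1) => c (Fin.castLE i'.isLt j))
      (hcs.injective.comp (Fin.castLE_injective _)) (fun j => ?_)
    refine Submodule.mem_inf.mpr ⟨hmem0 _, mem_Fflag_of n ?_⟩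
    calc (c (Fin.castLE i'.isLt j) : ℕ) + 1 ≤ u (Fin.castLE i'.isLt j) := hcu _
      _ ≤ u i' := hu.monotone (by simp [Fin.le_def]; have := j.isLt; omega)
  have hXv : Λ0 ∈ SchubertXv n v := by
    refine ⟨hfin, fun i' => ?_⟩
    have hik' := i'.isLt
    refine rank_ge n (fun j : Fin ((i' : ℕ) + 1) =>
        c ⟨k - 1 - (i' : ℕ) + (j : ℕ), by have := j.isLt; omega⟩)
      (fun j j' hjj => ?_) (fun j => ?_)
    · have := hcs.injective hjj
      have hvv : k - 1 - (i' : ℕ) + (j : ℕ) = k - 1 - (i' : ℕ) + (j' : ℕ) :=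
        congrArg Fin.val this
      exact Fin.ext (by omega)
    · refine Submodule.mem_inf.mpr ⟨hmem0 _, mem_Gflag_of n ?_⟩
      rw [hcval]
      have hj := j.isLt
      have hle : v (⟨k - 1 - (i' : ℕ) + (j : ℕ), by omega⟩ : Fin k).rev ≤ v i' :=
        hv.monotone (by simp [Fin.le_def]; omega)
      omega
  have hik2 : (i : ℕ) + 2 ≤ k := by omega
  refine ⟨Λ0, ⟨hXu, i, hik, hneq, ?_⟩, hXv⟩
  refine rank_ge n (fun j : Fin ((i : ℕ) + 2) => c (Fin.castLE hik2 j))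
    (hcs.injective.comp (Fin.castLE_injective _)) (fun j => ?_)
  refine Submodule.mem_inf.mpr ⟨hmem0 _, mem_Fflag_of n ?_⟩
  rw [hcval]
  have hj := j.isLt
  have hle : v (⟨(i : ℕ) + 1, hik⟩ : Fin k).rev ≤ v (Fin.castLE hik2 j).rev := by
    refine hv.monotone ?_
    simp [Fin.le_def]
    omega
  have h2 := hvn (Fin.castLE hik2 j).rev
  omega

/-- the coordinate singular point on the v-side -/
lemma exists_sing_point_v (hu : StrictMono u) (hv : StrictMono v)
    (hu1 : ∀ i, 1 ≤ u i) (hun : ∀ i, u i ≤ n)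
    (hv1 : ∀ i, 1 ≤ v i) (hvn : ∀ i, v i ≤ n)
    (hNE : ∀ j : Fin k, n < u j + v j.rev)
    (i : Fin k) (hik : (i : ℕ) + 1 < k)
    (hneq : v ⟨(i : ℕ) + 1, hik⟩ ≠ v i + 1)
    (hook : n < v i + u (⟨(i : ℕ) + 1, hik⟩ : Fin k).rev) :
    (SchubertXu n u ∩ SchubertXvSing n v).Nonempty := by
  have hn0 : 0 < n := lt_of_lt_of_le (hu1 i) (hun i)
  set e : Fin n → (Fin n → ℂ) := fun t => (Pi.basisFun ℂ (Fin n)) t with he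
  let c : Fin k → Fin n := fun j => ⟨u j - 1, by have := hu1 j; have := hun j; omega⟩
  have hcval : ∀ j, (c j : ℕ) = u j - 1 := fun j => rfl
  have hcs : StrictMono c := by
    intro j j' hjj
    have h2 : u j < u j' := hu hjj
    have h3 := hu1 j
    simp only [Fin.lt_def, hcval]
    omega
  set Λ0 : Submodule ℂ (Fin n → ℂ) :=
    Submodule.span ℂ (Set.range fun j => e (c j)) with hΛ0
  have hmem0 : ∀ j, e (c j) ∈ Λ0 := fun j => Submodule.subset_span ⟨j, rfl⟩
  have hfin : finrank ℂ Λ0 = k := by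
    have hli : LinearIndependent ℂ (fun j => e (c j)) :=
      (Pi.basisFun ℂ (Fin n)).linearIndependent.comp c hcs.injective
    rw [hΛ0, finrank_span_eq_card hli, Fintype.card_fin]
  -- key inequality for G-membership: n - v i' ≤ c j when k-1-i' ≤ j
  have hcg : ∀ (i' j : Fin k), k - 1 - (i' : ℕ) ≤ (j : ℕ) → n - v i' ≤ (c j : ℕ) := by
    intro i' j hji
    have h1 := hNE j
    have h2 : v j.rev ≤ v i' := hv.monotone (by simp [Fin.le_def]; have := j.isLt; omega)
    have h3 := hvn i'
    have h4 := hu1 j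
    rw [hcval]
    omega
  have hXu : Λ0 ∈ SchubertXu n u := by
    refine ⟨hfin, fun i' => ?_⟩
    refine rank_ge n (fun j : Fin ((i' : ℕ) + 1) => c (Fin.castLE i'.isLt j))
      (hcs.injective.comp (Fin.castLE_injective _)) (fun j => ?_)
    refine Submodule.mem_inf.mpr ⟨hmem0 _, mem_Fflag_of n ?_⟩
    have h1 := hu1 (Fin.castLE i'.isLt j)
    have h2 : u (Fin.castLE i'.isLt j) ≤ u i' :=
      hu.monotone (by simp [Fin.le_def]; have := j.isLt; omega)
    rw [hcval]
    omega
  have hXv : Λ0 ∈ SchubertXv n v := by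
    refine ⟨hfin, fun i' => ?_⟩
    have hik' := i'.isLt
    refine rank_ge n (fun j : Fin ((i' : ℕ) + 1) =>
        c ⟨k - 1 - (i' : ℕ) + (j : ℕ), by have := j.isLt; omega⟩)
      (fun j j' hjj => ?_) (fun j => ?_)
    · have := hcs.injective hjj
      have hvv : k - 1 - (i' : ℕ) + (j : ℕ) = k - 1 - (i' : ℕ) + (j' : ℕ) :=
        congrArg Fin.val this
      exact Fin.ext (by omega)
    · exact Submodule.mem_inf.mpr ⟨hmem0 _, mem_Gflag_of n (hcg i' _ (by simp))⟩
  refine ⟨Λ0, hXu, hXv, i, hik, hneq, ?_⟩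
  refine rank_ge n (fun j : Fin ((i : ℕ) + 2) =>
      c ⟨k - 2 - (i : ℕ) + (j : ℕ), by have := j.isLt; omega⟩)
    (fun j j' hjj => ?_) (fun j => ?_)
  · have := hcs.injective hjj
    have hvv : k - 2 - (i : ℕ) + (j : ℕ) = k - 2 - (i : ℕ) + (j' : ℕ) :=
      congrArg Fin.val this
    exact Fin.ext (by omega)
  · refine Submodule.mem_inf.mpr ⟨hmem0 _, mem_Gflag_of n ?_⟩
    have hj := j.isLt
    have h2 : u (⟨(i : ℕ) + 1, hik⟩ : Fin k).rev ≤
        u (⟨k - 2 - (i : ℕ) + (j : ℕ), by omega⟩ : Fin k) :=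
      hu.monotone (by simp [Fin.le_def]; omega)
    have h3 := hvn i
    have h4 := hu1 (⟨k - 2 - (i : ℕ) + (j : ℕ), by omega⟩ : Fin k)
    rw [hcval]
    omega

theorem richardson_smoothness_criterion (hu : StrictMono u) (hv : StrictMono v)
    (hu1 : ∀ i, 1 ≤ u i) (hun : ∀ i, u i ≤ n)
    (hv1 : ∀ i, 1 ≤ v i) (hvn : ∀ i, v i ≤ n)
    (hne : (SchubertXu n u ∩ SchubertXv n v).Nonempty) :
    (SchubertXuSing n u ∩ SchubertXv n v = ∅ ↔
      ∀ i : Fin k, ∀ h : (i : ℕ) + 1 < k,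
        u ⟨(i : ℕ) + 1, h⟩ ≠ u i + 1 →
          u i + v ⟨k - (i : ℕ) - 2, by omega⟩ ≤ n) ∧
    (SchubertXu n u ∩ SchubertXvSing n v = ∅ ↔
      ∀ i : Fin k, ∀ h : (i : ℕ) + 1 < k,
        v ⟨(i : ℕ) + 1, h⟩ ≠ v i + 1 →
          v i + u ⟨k - (i : ℕ) - 2, by omega⟩ ≤ n) ∧
    ((SchubertXuSing n u ∩ SchubertXv n v) ∪ (SchubertXu n u ∩ SchubertXvSing n v) = ∅ ↔
      ((∀ i : Fin k, ∀ h : (i : ℕ) + 1 < k,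
        u ⟨(i : ℕ) + 1, h⟩ ≠ u i + 1 →
          u i + v ⟨k - (i : ℕ) - 2, by omega⟩ ≤ n) ∧
       (∀ i : Fin k, ∀ h : (i : ℕ) + 1 < k,
        v ⟨(i : ℕ) + 1, h⟩ ≠ v i + 1 →
          v i + u ⟨k - (i : ℕ) - 2, by omega⟩ ≤ n))) := by
  have hNE : ∀ j : Fin k, n < u j + v j.rev := richardson_ineq n u v hne
  have huv : ∀ (i : Fin k) (h : (i : ℕ) + 1 < k),
      (⟨k - (i : ℕ) - 2, by omega⟩ : Fin k) = (⟨(i : ℕ) + 1, h⟩ : Fin k).rev := by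
    intro i h
    apply Fin.ext
    show k - (i : ℕ) - 2 = k - ((i : ℕ) + 1 + 1)
    omega
  have P1 : SchubertXuSing n u ∩ SchubertXv n v = ∅ ↔
      (∀ i : Fin k, ∀ h : (i : ℕ) + 1 < k, u ⟨(i : ℕ) + 1, h⟩ ≠ u i + 1 →
        u i + v ⟨k - (i : ℕ) - 2, by omega⟩ ≤ n) := by
    constructor
    · intro hemp i h hneq
      by_contra hgt
      push_neg at hgt
      rw [huv i h] at hgt
      obtain ⟨Λ, hΛ⟩ := exists_sing_point_u n u v hu hv hu1 hun hv1 hvn hNE i h hneq hgt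
      rw [hemp] at hΛ
      exact hΛ
    · intro hcond
      rw [Set.eq_empty_iff_forall_notMem]
      rintro Λ ⟨⟨hΛu, i, h, hneq, hdim⟩, hΛv⟩
      have hq := hΛv.2 (⟨(i : ℕ) + 1, h⟩ : Fin k).rev
      have hforce := dim_force n hΛu.1 hdim hq
        (by show k < (i : ℕ) + 2 + ((k - ((i : ℕ) + 1 + 1)) + 1); omega)
      have hc := hcond i h hneq
      rw [huv i h] at hc
      omega
  have P2 : SchubertXu n u ∩ SchubertXvSing n v = ∅ ↔
      (∀ i : Fin k, ∀ h : (i : ℕ) + 1 < k, v ⟨(i : ℕ) + 1, h⟩ ≠ v i + 1 →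
        v i + u ⟨k - (i : ℕ) - 2, by omega⟩ ≤ n) := by
    constructor
    · intro hemp i h hneq
      by_contra hgt
      push_neg at hgt
      rw [huv i h] at hgt
      obtain ⟨Λ, hΛ⟩ := exists_sing_point_v n u v hu hv hu1 hun hv1 hvn hNE i h hneq hgt
      rw [hemp] at hΛ
      exact hΛ
    · intro hcond
      rw [Set.eq_empty_iff_forall_notMem]
      rintro Λ ⟨hΛu, hΛv, i, h, hneq, hdim⟩
      have hp := hΛu.2 (⟨(i : ℕ) + 1, h⟩ : Fin k).rev
      have hforce := dim_force n hΛu.1 hp hdim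
        (by show k < ((k - ((i : ℕ) + 1 + 1)) + 1) + ((i : ℕ) + 2); omega)
      have hc := hcond i h hneq
      rw [huv i h] at hc
      omega
  exact ⟨P1, P2, by rw [Set.union_empty_iff]; exact and_congr P1 P2⟩

end
end
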